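/- A residuated lattice A is quasicomplemented if and only if every filter of A containing no dense element is contained in some minimal prime filter. -/

import Mathlib

/-- A (bounded, integral, commutative) residuated lattice. -/
class ResLattice (A : Type*) extends Lattice A, CommMonoid A, OrderBot A where
  himp : A → A → A
  adjunction : ∀ x y z : A, x * y ≤ z ↔ x ≤ himp y z
  le_one : ∀ x : A, x ≤ 1

variable {A : Type*} [ResLattice A]

/-- Coannihilator of a subset: `X^⊥ = {a | a ⊔ x = 1 for all x ∈ X}`. -/
def Coann (X : Set A) : Set A := {a | ∀ x ∈ X, a ⊔ x = 1}

/-- Coannulet of an element: `x^⊥`. -/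
def rperp (x : A) : Set A := Coann {x}

/-- The principal filter generated by `x`. -/
def PFil (x : A) : Set A := {a | ∃ n : ℕ, 0 < n ∧ x ^ n ≤ a}

/-- Filters of a residuated lattice. -/
def IsRLFilter (F : Set A) : Prop :=
  F.Nonempty ∧ (∀ x ∈ F, ∀ y ∈ F, x * y ∈ F) ∧ (∀ x ∈ F, ∀ y : A, x ⊔ y ∈ F)

/-- Prime filters. -/
def IsRLPrime (P : Set A) : Prop :=
  IsRLFilter P ∧ P ≠ Set.univ ∧ ∀ x y : A, x ⊔ y ∈ P → x ∈ P ∨ y ∈ P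

/-- Minimal prime filters. -/
def IsRLMinPrime (P : Set A) : Prop :=
  IsRLPrime P ∧ ∀ Q : Set A, IsRLPrime Q → Q ⊆ P → Q = P

/-- Quasicomplemented residuated lattice. -/
def Quasicomplemented (A : Type*) [ResLattice A] : Prop :=
  ∀ x : A, ∃ y : A, Coann (rperp x) = rperp y

/-- α-filters. -/
def IsAlphaFilter (F : Set A) : Prop :=
  IsRLFilter F ∧ ∀ x ∈ F, Coann (rperp x) ⊆ F

/-- The α-filter generated by a subset. -/
def alphaGen (X : Set A) : Set A := ⋂₀ {G : Set A | IsAlphaFilter G ∧ X ⊆ G}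

/-!
A prime filter `P` is minimal exactly when every `z ∈ P` has a "witness" `y ∉ P` with
`z ⊔ y = 1`. If `x^⊥⊥ = y^⊥`, then `x ⊔ y = 1` and `x ⊙ y` is dense, so `y` is such a witness
for `x` in any prime filter avoiding the dense elements; these filters exist above every filter
without dense elements by Zorn's lemma. Conversely, the filter generated by `x^⊥ ∪ {x}` cannot lie
in a minimal prime filter (the witness of `x` would lie in `x^⊥`), so it contains a dense element
`d ≥ b ⊙ xⁿ` with `b ∈ x^⊥`, and then `x^⊥⊥ = b^⊥`.
-/

namespace ResLattice

instance : IsOrderedMonoid A where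
  mul_le_mul_left a b h c := (adjunction a c (b * c)).2 (h.trans ((adjunction b c _).1 le_rfl))

lemma eq_one_of_one_le {a : A} (h : 1 ≤ a) : a = 1 := (le_one a).antisymm h

lemma mul_le_left (x y : A) : x * y ≤ x := mul_le_of_le_one_right' (le_one y)

lemma mul_le_right (x y : A) : x * y ≤ y := mul_le_of_le_one_left' (le_one x)

lemma mul_sup (a b c : A) : a * (b ⊔ c) = a * b ⊔ a * c := by
  refine le_antisymm ?_ (sup_le (mul_le_mul_right le_sup_left a) (mul_le_mul_right le_sup_right a))
  rw [mul_comm, adjunction]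
  refine sup_le ((adjunction _ _ _).1 ?_) ((adjunction _ _ _).1 ?_)
  · rw [mul_comm]; exact le_sup_left
  · rw [mul_comm]; exact le_sup_right

lemma sup_mul_sup_le (x y z : A) : (x ⊔ y) * (x ⊔ z) ≤ x ⊔ y * z := by
  rw [mul_sup]
  refine sup_le ((mul_le_right _ _).trans le_sup_left) ?_
  rw [mul_comm, mul_sup]
  exact sup_le ((mul_le_right _ _).trans le_sup_left) (by rw [mul_comm]; exact le_sup_right)

lemma sup_pow_le (x y : A) (n : ℕ) : (x ⊔ y) ^ n ≤ x ⊔ y ^ n := by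
  induction n with
  | zero => simp
  | succ n ih =>
    calc (x ⊔ y) ^ (n + 1) ≤ (x ⊔ y ^ n) * (x ⊔ y) := by rw [pow_succ]; exact mul_le_mul_left ih _
      _ ≤ x ⊔ y ^ (n + 1) := by rw [pow_succ]; exact sup_mul_sup_le _ _ _

lemma sup_mul_eq_one {a x y : A} (hx : a ⊔ x = 1) (hy : a ⊔ y = 1) : a ⊔ x * y = 1 :=
  eq_one_of_one_le <| by simpa [hx, hy] using sup_mul_sup_le a x y

lemma sup_pow_eq_one {a x : A} (hx : a ⊔ x = 1) (n : ℕ) : a ⊔ x ^ n = 1 :=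
  eq_one_of_one_le <| by simpa [hx] using sup_pow_le a x n

end ResLattice

open ResLattice

@[simp]
lemma mem_coann {X : Set A} {a : A} : a ∈ Coann X ↔ ∀ x ∈ X, a ⊔ x = 1 := Iff.rfl

@[simp]
lemma mem_rperp {a x : A} : a ∈ rperp x ↔ a ⊔ x = 1 := by simp [rperp]

lemma one_mem_rperp (x : A) : 1 ∈ rperp x := mem_rperp.2 (sup_eq_left.2 (le_one x))

lemma rperp_mono {x y : A} (h : x ≤ y) : rperp x ⊆ rperp y := fun a ha =>
  mem_rperp.2 <| eq_one_of_one_le <| (mem_rperp.1 ha).symm.le.trans (sup_le_sup_left h a)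

lemma rperp_eq_singleton_one_iff {d : A} : rperp d = {1} ↔ ∀ a : A, a ⊔ d = 1 → a = 1 := by
  simp only [Set.eq_singleton_iff_unique_mem, mem_rperp, sup_eq_left.2 (le_one d), true_and]

lemma rperp_eq_singleton_one_of_le {d e : A} (hd : rperp d = {1}) (h : e ≤ d) :
    rperp e = {1} :=
  (hd ▸ rperp_mono h).antisymm (Set.singleton_subset_iff.2 (one_mem_rperp e))

lemma supClosed_dense : SupClosed {d : A | rperp d = {1}} := by
  intro d hd e he
  refine rperp_eq_singleton_one_iff.2 fun a ha => rperp_eq_singleton_one_iff.1 he a ?_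
  exact rperp_eq_singleton_one_iff.1 hd _ (by rwa [sup_right_comm, sup_assoc])

namespace IsRLFilter

variable {F : Set A} (hF : IsRLFilter F)
include hF

lemma mul_mem {x y : A} (hx : x ∈ F) (hy : y ∈ F) : x * y ∈ F := hF.2.1 x hx y hy

lemma sup_mem {a : A} (ha : a ∈ F) (b : A) : a ⊔ b ∈ F := hF.2.2 a ha b

lemma mem_of_le {a b : A} (ha : a ∈ F) (h : a ≤ b) : b ∈ F := by
  simpa [sup_eq_right.2 h] using hF.sup_mem ha b

lemma one_mem : (1 : A) ∈ F :=
  let ⟨_, ha⟩ := hF.1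
  hF.mem_of_le ha (le_one _)

lemma pow_mem {a : A} (ha : a ∈ F) (n : ℕ) : a ^ n ∈ F := by
  induction n with
  | zero => simpa using hF.one_mem
  | succ n ih => rw [pow_succ]; exact hF.mul_mem ih ha

lemma sup_mem_of_mul_pow_le {p x y s : A} {n : ℕ} (hp : p ∈ F) (hxy : x ⊔ y ∈ F)
    (h : p * x ^ n ≤ s) : s ⊔ y ∈ F := by
  refine hF.mem_of_le (hF.mul_mem (hF.sup_mem hp y) (hF.pow_mem hxy n)) ?_
  calc (p ⊔ y) * (x ⊔ y) ^ n = (y ⊔ p) * (y ⊔ x) ^ n := by rw [sup_comm p, sup_comm x]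
    _ ≤ (y ⊔ p) * (y ⊔ x ^ n) := mul_le_mul_right (sup_pow_le y x n) _
    _ ≤ y ⊔ p * x ^ n := sup_mul_sup_le y p (x ^ n)
    _ ≤ s ⊔ y := by rw [sup_comm]; exact sup_le_sup_right h y

end IsRLFilter

lemma isRLFilter_rperp (x : A) : IsRLFilter (rperp x) := by
  refine ⟨⟨1, one_mem_rperp x⟩, fun a ha b hb => ?_, fun a ha y => ?_⟩
  · simp only [mem_rperp, sup_comm _ x] at ha hb ⊢
    exact sup_mul_eq_one ha hb
  · simp only [mem_rperp] at ha ⊢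
    exact eq_one_of_one_le (ha.symm.le.trans (by rw [sup_right_comm]; exact le_sup_left))

lemma IsRLFilter.sUnion {c : Set (Set A)} (hc : ∀ G ∈ c, IsRLFilter G)
    (hchain : IsChain (· ⊆ ·) c) (hne : c.Nonempty) : IsRLFilter (⋃₀ c) := by
  obtain ⟨G, hG⟩ := hne
  refine ⟨(hc G hG).1.mono (Set.subset_sUnion_of_mem hG), ?_, ?_⟩
  · rintro a ⟨G, hG, haG⟩ b ⟨H, hH, hbH⟩
    rcases hchain.total hG hH with hGH | hHG
    · exact ⟨H, hH, (hc H hH).mul_mem (hGH haG) hbH⟩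
    · exact ⟨G, hG, (hc G hG).mul_mem haG (hHG hbH)⟩
  · rintro a ⟨G, hG, haG⟩ y
    exact ⟨G, hG, (hc G hG).sup_mem haG y⟩

def filterAdjoin (F : Set A) (x : A) : Set A := {a | ∃ p ∈ F, ∃ n : ℕ, p * x ^ n ≤ a}

lemma subset_filterAdjoin (F : Set A) (x : A) : F ⊆ filterAdjoin F x :=
  fun a ha => ⟨a, ha, 0, by simp⟩

section filterAdjoin

variable {F : Set A} (hF : IsRLFilter F) (x : A)
include hF

lemma isRLFilter_filterAdjoin : IsRLFilter (filterAdjoin F x) := by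
  refine ⟨⟨1, 1, hF.one_mem, 0, by simp⟩, ?_, ?_⟩
  · rintro a ⟨p, hp, n, hn⟩ b ⟨q, hq, m, hm⟩
    refine ⟨p * q, hF.mul_mem hp hq, n + m, ?_⟩
    rw [pow_add, mul_mul_mul_comm]
    exact mul_le_mul' hn hm
  · rintro a ⟨p, hp, n, hn⟩ y
    exact ⟨p, hp, n, hn.trans le_sup_left⟩

lemma mem_filterAdjoin_self : x ∈ filterAdjoin F x := ⟨1, hF.one_mem, 1, by simp⟩

end filterAdjoin

lemma IsRLFilter.mem_or_mem_of_sup_mem {P S : Set A} (hP : IsRLFilter P) (hS : SupClosed S)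
    (hPS : Disjoint P S) (hext : ∀ c ∉ P, ∃ s ∈ S, s ∈ filterAdjoin P c)
    {a b : A} (hab : a ⊔ b ∈ P) : a ∈ P ∨ b ∈ P := by
  by_contra! hnot
  obtain ⟨s, hs, p, hp, n, hpn⟩ := hext a hnot.1
  obtain ⟨t, ht, q, hq, m, hqm⟩ := hext b hnot.2
  have hsb : s ⊔ b ∈ P := hP.sup_mem_of_mul_pow_le hp hab hpn
  have hts : t ⊔ s ∈ P := hP.sup_mem_of_mul_pow_le hq (sup_comm s b ▸ hsb) hqm
  exact Set.disjoint_left.1 hPS hts (hS ht hs)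

lemma exists_isRLPrime_of_disjoint {F S : Set A} (hF : IsRLFilter F) (hS : S.Nonempty)
    (hSsup : SupClosed S) (hFS : Disjoint F S) :
    ∃ P : Set A, IsRLPrime P ∧ F ⊆ P ∧ Disjoint P S := by
  set 𝒢 : Set (Set A) := {G | IsRLFilter G ∧ F ⊆ G ∧ Disjoint G S}
  have hchains : ∀ c ⊆ 𝒢, IsChain (· ⊆ ·) c → c.Nonempty → ∃ ub ∈ 𝒢, ∀ G ∈ c, G ⊆ ub := by
    intro c hc hchain hne
    obtain ⟨G, hG⟩ := hne
    refine ⟨⋃₀ c, ⟨IsRLFilter.sUnion (fun G hG => (hc hG).1) hchain ⟨G, hG⟩, ?_, ?_⟩,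
      fun _ => Set.subset_sUnion_of_mem⟩
    · exact (hc hG).2.1.trans (Set.subset_sUnion_of_mem hG)
    · exact Set.disjoint_sUnion_left.2 fun G hG => (hc hG).2.2
  obtain ⟨P, hFP, ⟨hP, -, hPS⟩, hmax⟩ := zorn_subset_nonempty 𝒢 hchains F ⟨hF, le_rfl, hFS⟩
  have hext : ∀ c ∉ P, ∃ s ∈ S, s ∈ filterAdjoin P c := by
    intro c hc
    by_contra! hno
    have hP𝒢 : filterAdjoin P c ∈ 𝒢 :=
      ⟨isRLFilter_filterAdjoin hP c, hFP.trans (subset_filterAdjoin P c),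
        Set.disjoint_left.2 fun s hsP hsS => hno s hsS hsP⟩
    exact hc (hmax hP𝒢 (subset_filterAdjoin P c) (mem_filterAdjoin_self hP c))
  refine ⟨P, ⟨hP, fun h => ?_, fun a b => IsRLFilter.mem_or_mem_of_sup_mem hP hSsup hPS hext⟩,
    hFP, hPS⟩
  obtain ⟨s, hs⟩ := hS
  exact Set.disjoint_left.1 hPS (h ▸ Set.mem_univ s) hs

lemma isRLMinPrime_iff {P : Set A} (hP : IsRLPrime P) :
    IsRLMinPrime P ↔ ∀ z ∈ P, ∃ y ∉ P, z ⊔ y = 1 := by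
  refine ⟨fun hmin z hz => ?_, fun h => ⟨hP, fun Q hQ hQP => hQP.antisymm fun z hz => ?_⟩⟩
  · by_contra! hno
    obtain ⟨c₀, hc₀⟩ := (Set.ne_univ_iff_exists_notMem P).1 hP.2.1
    -- A prime filter containing `z^⊥` and avoiding `S` lies inside `P` but misses `z`.
    let S : Set A := (· ⊔ z) '' Pᶜ
    have hSsup : SupClosed S := by
      rintro _ ⟨c, hc, rfl⟩ _ ⟨c', hc', rfl⟩
      refine ⟨c ⊔ c', fun hcc' => (hP.2.2 c c' hcc').elim hc hc', ?_⟩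
      rw [sup_sup_sup_comm, sup_idem]
    have hzS : Disjoint (rperp z) S := by
      refine Set.disjoint_left.2 ?_
      rintro _ hcz ⟨c, hc, rfl⟩
      rw [mem_rperp, sup_assoc, sup_idem] at hcz
      exact hno c hc (sup_comm c z ▸ hcz)
    obtain ⟨Q, hQ, -, hQS⟩ :=
      exists_isRLPrime_of_disjoint (S := S) (isRLFilter_rperp z) ⟨c₀ ⊔ z, c₀, hc₀, rfl⟩ hSsup hzS
    have hQP : Q ⊆ P := fun c hcQ => by
      by_contra hcP
      exact Set.disjoint_left.1 hQS (hQ.1.sup_mem hcQ z) ⟨c, hcP, rfl⟩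
    have hzQ : z ∈ Q := hmin.2 Q hQ hQP ▸ hz
    exact Set.disjoint_left.1 hQS (hQ.1.sup_mem hzQ c₀) ⟨c₀, hc₀, sup_comm c₀ z⟩
  · obtain ⟨y, hy, hzy⟩ := h z hz
    exact (hQ.2.2 z y (hzy ▸ hQ.1.one_mem)).resolve_right fun hyQ => hy (hQP hyQ)

lemma sup_eq_one_of_coann_rperp_eq {x y : A} (h : Coann (rperp x) = rperp y) : x ⊔ y = 1 :=
  mem_rperp.1 (h ▸ fun _ hc => by rw [sup_comm]; exact mem_rperp.1 hc)

lemma rperp_mul_eq_singleton_one_of_coann_rperp_eq {x y : A} (h : Coann (rperp x) = rperp y) :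
    rperp (x * y) = {1} := by
  refine rperp_eq_singleton_one_iff.2 fun a ha => ?_
  have hax : a ∈ rperp x := rperp_mono (mul_le_left x y) (mem_rperp.2 ha)
  have hay : a ∈ Coann (rperp x) := h ▸ rperp_mono (mul_le_right x y) (mem_rperp.2 ha)
  simpa using hay a hax

lemma coann_rperp_eq_of_dense {x b : A} (hb : b ⊔ x = 1) {n : ℕ}
    (hd : rperp (b * x ^ n) = {1}) : Coann (rperp x) = rperp b := by
  ext a
  simp only [mem_coann, mem_rperp]
  refine ⟨fun ha => ha b hb, fun hab c hcx => rperp_eq_singleton_one_iff.1 hd _ ?_⟩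
  refine sup_mul_eq_one (eq_one_of_one_le ?_) (eq_one_of_one_le ?_)
  · exact hab.symm.le.trans (sup_le_sup_right le_sup_left b)
  · exact (sup_pow_eq_one hcx n).symm.le.trans (sup_le_sup_right le_sup_right _)

lemma Quasicomplemented.exists_isRLMinPrime_superset (hq : Quasicomplemented A) {F : Set A}
    (hF : IsRLFilter F) (hnd : ¬ ∃ d ∈ F, rperp d = {1}) : ∃ m : Set A, IsRLMinPrime m ∧ F ⊆ m := by
  have hbot : rperp (⊥ : A) = {1} := rperp_eq_singleton_one_iff.2 fun a ha => by simpa using ha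
  obtain ⟨P, hP, hFP, hPS⟩ := exists_isRLPrime_of_disjoint (S := {d | rperp d = {1}}) hF
    ⟨⊥, hbot⟩ supClosed_dense (Set.disjoint_left.2 fun d hdF hd => hnd ⟨d, hdF, hd⟩)
  refine ⟨P, (isRLMinPrime_iff hP).2 fun w hw => ?_, hFP⟩
  obtain ⟨y, hy⟩ := hq w
  refine ⟨y, fun hyP => ?_, sup_eq_one_of_coann_rperp_eq hy⟩
  exact Set.disjoint_left.1 hPS (hP.1.mul_mem hw hyP)
    (rperp_mul_eq_singleton_one_of_coann_rperp_eq hy)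

lemma quasicomplemented_of_forall_exists_isRLMinPrime_superset
    (h : ∀ F : Set A, IsRLFilter F → (¬ ∃ d ∈ F, rperp d = {1}) →
      ∃ m : Set A, IsRLMinPrime m ∧ F ⊆ m) : Quasicomplemented A := by
  intro x
  have hG : IsRLFilter (filterAdjoin (rperp x) x) := isRLFilter_filterAdjoin (isRLFilter_rperp x) x
  by_cases hd : ∃ d ∈ filterAdjoin (rperp x) x, rperp d = {1}
  · obtain ⟨d, ⟨b, hb, n, hbd⟩, hd⟩ := hd
    exact ⟨b, coann_rperp_eq_of_dense (mem_rperp.1 hb) (rperp_eq_singleton_one_of_le hd hbd)⟩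
  · obtain ⟨m, hm, hGm⟩ := h _ hG hd
    have hxm : x ∈ m := hGm (mem_filterAdjoin_self (isRLFilter_rperp x) x)
    obtain ⟨y, hym, hxy⟩ := (isRLMinPrime_iff hm.1).1 hm x hxm
    have hy : y ∈ rperp x := mem_rperp.2 (by rw [sup_comm]; exact hxy)
    exact absurd (hGm (subset_filterAdjoin (rperp x) x hy)) hym

theorem stmt5 :
    Quasicomplemented A ↔
      ∀ F : Set A, IsRLFilter F → (¬ ∃ d ∈ F, rperp d = {1}) →
        ∃ m : Set A, IsRLMinPrime m ∧ F ⊆ m :=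
  ⟨fun hq _ hF hnd => hq.exists_isRLMinPrime_superset hF hnd,
    quasicomplemented_of_forall_exists_isRLMinPrime_superset⟩
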